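/- arXiv:1507.05541 — 3 statements merged into one kernel-verified Lean document; each statement's English description precedes it below -/
import Mathlib

section
/- If every line e of a power network N has susceptance lower bound s_e = 0 (and finite upper bound t_e > 0), then MFF(N) = MF(N). -/
/-- A power network: finite buses, finite lines between distinct buses,
generators, loads (disjoint from generators), susceptance intervals
`[s e, t e]` with `0 ≤ s e ≤ t e`, and capacities `cap e ≥ 0`. -/
structure Network where
  Bus : Type
  Line : Type
  [finBus : Fintype Bus]
  [finLine : Fintype Line]
  [decBus : DecidableEq Bus]
  src : Line → Bus
  dst : Line → Bus
  src_ne_dst : ∀ e, src e ≠ dst e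
  Gen : Bus → Prop
  Load : Bus → Prop
  load_not_gen : ∀ b, Load b → ¬ Gen b
  s : Line → ℝ
  t : Line → ℝ
  cap : Line → ℝ
  s_nonneg : ∀ e, 0 ≤ s e
  s_le_t : ∀ e, s e ≤ t e
  cap_nonneg : ∀ e, 0 ≤ cap e
  no_parallel : ∀ e₁ e₂ : Line,
    ({src e₁, dst e₁} : Set Bus) = {src e₂, dst e₂} → e₁ = e₂

attribute [instance] Network.finBus Network.finLine Network.decBus

/-- Kirchhoff's conservation law: at every bus, outgoing flow minus
incoming flow equals generation minus load. -/
def Network.Kirchhoff (N : Network) (f : N.Line → ℝ) (g l : N.Bus → ℝ) : Prop :=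
  ∀ a : N.Bus,
    (∑ e : N.Line, if N.src e = a then f e else 0) -
      (∑ e : N.Line, if N.dst e = a then f e else 0) = g a - l a

/-- Generation is nonnegative and vanishes outside generators; load is
nonnegative and vanishes outside loads. -/
def Network.GenLoad (N : Network) (g l : N.Bus → ℝ) : Prop :=
  (∀ a, 0 ≤ g a) ∧ (∀ a, 0 ≤ l a) ∧
    (∀ a, ¬ N.Gen a → g a = 0) ∧ (∀ a, ¬ N.Load a → l a = 0)

/-- Capacity constraints `|f e| ≤ cap e`. -/
def Network.CapOK (N : Network) (f : N.Line → ℝ) : Prop :=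
  ∀ e, |f e| ≤ N.cap e

/-- The LDC power law: `f_ab = σ_ab (θ_b - θ_a)`. -/
def Network.LDC (N : Network) (σ : N.Line → ℝ) (θ : N.Bus → ℝ)
    (f : N.Line → ℝ) : Prop :=
  ∀ e, f e = σ e * (θ (N.dst e) - θ (N.src e))

/-- Maximum FACTS flow: supremum of total generation over feasible FACTS
solutions `(σ, θ, f, g, l)`. -/
noncomputable def Network.MFF (N : Network) : ℝ :=
  sSup {x | ∃ σ θ f g l, N.Kirchhoff f g l ∧ N.LDC σ θ f ∧
    (∀ e, N.s e ≤ σ e ∧ σ e ≤ N.t e) ∧ N.CapOK f ∧ N.GenLoad g l ∧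
    x = ∑ a, g a}

/-- Maximum (capacity-only) flow: supremum of total generation over triples
`(f, g, l)` satisfying only Kirchhoff's law and the capacity bounds. -/
noncomputable def Network.MF (N : Network) : ℝ :=
  sSup {x | ∃ f g l, N.Kirchhoff f g l ∧ N.CapOK f ∧ N.GenLoad g l ∧
    x = ∑ a, g a}

open scoped Classical

namespace Network

/-- Divergence of a flow at a bus. -/
noncomputable def dvg (N : Network) (f : N.Line → ℝ) (a : N.Bus) : ℝ :=
  (∑ e : N.Line, if N.src e = a then f e else 0) -
    (∑ e : N.Line, if N.dst e = a then f e else 0)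

/-- Flow-direction relation: there is a line carrying nonzero flow from `a` to `b`. -/
def fr (N : Network) (f : N.Line → ℝ) (a b : N.Bus) : Prop :=
  ∃ e, (0 < f e ∧ N.src e = a ∧ N.dst e = b) ∨ (f e < 0 ∧ N.dst e = a ∧ N.src e = b)

lemma dvg_sub_smul (N : Network) (f m : N.Line → ℝ) (ε : ℝ) (a : N.Bus) :
    N.dvg (fun e => f e - ε * m e) a = N.dvg f a - ε * N.dvg m a := by
  have key : ∀ p : N.Line → N.Bus,
      (∑ e : N.Line, if p e = a then f e - ε * m e else 0)
        = (∑ e : N.Line, if p e = a then f e else 0) -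
            ε * ∑ e : N.Line, if p e = a then m e else 0 := by
    intro p
    rw [Finset.mul_sum, ← Finset.sum_sub_distrib]
    refine Finset.sum_congr rfl fun e _ => ?_
    split_ifs <;> ring
  simp only [dvg, key]
  ring

lemma dvg_add (N : Network) (f m : N.Line → ℝ) (a : N.Bus) :
    N.dvg (fun e => f e + m e) a = N.dvg f a + N.dvg m a := by
  have key : ∀ p : N.Line → N.Bus,
      (∑ e : N.Line, if p e = a then f e + m e else 0)
        = (∑ e : N.Line, if p e = a then f e else 0) +
            (∑ e : N.Line, if p e = a then m e else 0) := by
    intro p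
    rw [← Finset.sum_add_distrib]
    refine Finset.sum_congr rfl fun e _ => ?_
    split_ifs <;> ring
  simp only [dvg, key]
  ring

lemma dvg_single (N : Network) (e₀ : N.Line) (c : ℝ) (x : N.Bus) :
    N.dvg (fun e => if e = e₀ then c else 0) x =
      (if N.src e₀ = x then c else 0) - (if N.dst e₀ = x then c else 0) := by
  have key : ∀ p : N.Line → N.Bus,
      (∑ e : N.Line, if p e = x then (if e = e₀ then c else 0) else 0)
        = (if p e₀ = x then c else 0) := by
    intro p
    rw [Finset.sum_eq_single_of_mem e₀ (Finset.mem_univ e₀)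
      (fun e _ h => by simp [h])]
    split_ifs <;> simp_all
  simp only [dvg, key]

/-- An elementary multiplicity vector supported on one line, with divergence
`δ_u - δ_v`, for a single flow-direction step `u → v`. -/
lemma fr_mult (N : Network) (f : N.Line → ℝ) {u v : N.Bus} (hr : N.fr f u v) :
    ∃ p : N.Line → ℝ, (∀ e, ∃ k : ℕ, p e = k * Real.sign (f e)) ∧ (∃ e, p e ≠ 0) ∧
      ∀ x, N.dvg p x = (if u = x then (1:ℝ) else 0) - (if v = x then 1 else 0) := by
  obtain ⟨e, he⟩ := hr
  refine ⟨fun e' => if e' = e then Real.sign (f e) else 0, ?_, ⟨e, ?_⟩, ?_⟩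
  · intro e'
    rcases eq_or_ne e' e with rfl | h
    · exact ⟨1, by simp⟩
    · exact ⟨0, by simp [h]⟩
  · simp only [if_pos rfl]
    rcases he with ⟨hpos, _, _⟩ | ⟨hneg, _, _⟩
    · rw [Real.sign_of_pos hpos]; norm_num
    · rw [Real.sign_of_neg hneg]; norm_num
  · intro x
    rw [N.dvg_single]
    rcases he with ⟨hpos, h1, h2⟩ | ⟨hneg, h1, h2⟩
    · subst h1; subst h2
      rw [Real.sign_of_pos hpos]
    · subst h1; subst h2
      rw [Real.sign_of_neg hneg]
      split_ifs <;> ring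

/-- Along a chain of flow-direction steps from `a` to `b`, there is a nonzero
multiplicity vector aligned with `f` whose divergence is `δ_a - δ_b`. -/
lemma exists_mult (N : Network) (f : N.Line → ℝ) {a b : N.Bus}
    (h : Relation.TransGen (N.fr f) a b) :
    ∃ m : N.Line → ℝ, (∀ e, ∃ k : ℕ, m e = k * Real.sign (f e)) ∧ (∃ e, m e ≠ 0) ∧
      ∀ x, N.dvg m x = (if a = x then (1:ℝ) else 0) - (if b = x then 1 else 0) := by
  induction h with
  | single h => exact N.fr_mult f h
  | tail _ h₂ ih =>
    obtain ⟨m, hm1, ⟨e₁, he₁⟩, hm3⟩ := ih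
    obtain ⟨p, hp1, _, hp3⟩ := N.fr_mult f h₂
    refine ⟨fun e => m e + p e, ?_, ⟨e₁, ?_⟩, ?_⟩
    · intro e
      obtain ⟨k, hk⟩ := hm1 e
      obtain ⟨j, hj⟩ := hp1 e
      exact ⟨k + j, by dsimp only; rw [hk, hj]; push_cast; ring⟩
    · obtain ⟨k, hk⟩ := hm1 e₁
      obtain ⟨j, hj⟩ := hp1 e₁
      rw [hk] at he₁
      have hs : Real.sign (f e₁) ≠ 0 := right_ne_zero_of_mul he₁
      have hk0 : (k : ℝ) ≠ 0 := left_ne_zero_of_mul he₁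
      dsimp only
      rw [hk, hj, ← add_mul]
      refine mul_ne_zero ?_ hs
      have : (0:ℝ) < k := lt_of_le_of_ne (Nat.cast_nonneg k) (Ne.symm hk0)
      positivity
    · intro x
      rw [N.dvg_add, hm3 x, hp3 x]
      ring

/-- Key lemma: any flow can be replaced by an LDC-realizable flow with the same
divergence and pointwise no larger magnitude, provided all `t e > 0`. -/
lemma exists_realizable (N : Network) (ht : ∀ e, 0 < N.t e) :
    ∀ (n : ℕ) (f : N.Line → ℝ), (Finset.univ.filter fun e => f e ≠ 0).card ≤ n →
    ∃ (σ : N.Line → ℝ) (θ : N.Bus → ℝ) (f' : N.Line → ℝ),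
      N.LDC σ θ f' ∧ (∀ e, 0 ≤ σ e ∧ σ e ≤ N.t e) ∧ (∀ e, |f' e| ≤ |f e|) ∧
      (∀ a, N.dvg f' a = N.dvg f a) := by
  intro n
  induction n with
  | zero =>
    intro f hf
    have hall : ∀ e, f e = 0 := by
      intro e
      by_contra h
      have hmem : e ∈ Finset.univ.filter (fun e => f e ≠ 0) := by simp [h]
      have := Finset.card_pos.mpr ⟨e, hmem⟩
      omega
    exact ⟨fun _ => 0, fun _ => 0, f, fun e => by simp [hall e],
      fun e => ⟨le_rfl, (ht e).le⟩, fun e => le_rfl, fun a => rfl⟩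
  | succ n ih =>
    intro f hf
    by_cases hcyc : ∃ a, Relation.TransGen (N.fr f) a a
    · -- there is a cycle: cancel it and use the induction hypothesis
      obtain ⟨a, ha⟩ := hcyc
      obtain ⟨m, hm1, ⟨e₁, he₁⟩, hm3⟩ := N.exists_mult f ha
      have hdvg0 : ∀ x, N.dvg m x = 0 := by
        intro x; rw [hm3 x]; ring
      have hfm : ∀ e, m e ≠ 0 → f e ≠ 0 := by
        intro e hme hfe
        obtain ⟨k, hk⟩ := hm1 e
        rw [hk, hfe, Real.sign_zero, mul_zero] at hme
        exact hme rfl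
      set T := Finset.univ.filter (fun e => m e ≠ 0) with hT
      have hTne : T.Nonempty := ⟨e₁, by simp [hT, he₁]⟩
      set ε := T.inf' hTne (fun e => |f e| / |m e|) with hε
      have hεle : ∀ e ∈ T, ε ≤ |f e| / |m e| := fun e he => Finset.inf'_le _ he
      have hεpos : 0 < ε := by
        rw [hε, Finset.lt_inf'_iff]
        intro e he
        have hme : m e ≠ 0 := by simpa [hT] using he
        exact div_pos (abs_pos.mpr (hfm e hme)) (abs_pos.mpr hme)
      obtain ⟨e₀, he₀T, he₀⟩ := Finset.exists_mem_eq_inf' hTne (fun e => |f e| / |m e|)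
      set f₂ := fun e => f e - ε * m e with hf₂
      -- pointwise analysis
      have hpt : ∀ e, m e ≠ 0 →
          |f₂ e| = |f e| - ε * |m e| ∧ ε * |m e| ≤ |f e| := by
        intro e hme
        have heT : e ∈ T := by simp [hT, hme]
        obtain ⟨k, hk⟩ := hm1 e
        have hεk : ε * |m e| ≤ |f e| := by
          have h1 := hεle e heT
          have h2 : 0 < |m e| := abs_pos.mpr hme
          calc ε * |m e| ≤ (|f e| / |m e|) * |m e| :=
                mul_le_mul_of_nonneg_right h1 h2.le
            _ = |f e| := div_mul_cancel₀ _ h2.ne'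
        refine ⟨?_, hεk⟩
        rcases lt_trichotomy (f e) 0 with hneg | h0 | hpos
        · rw [Real.sign_of_neg hneg] at hk
          have hk' : m e = -k := by rw [hk]; ring
          have hkabs : |m e| = k := by rw [hk']; simp
          have hfabs : |f e| = -f e := abs_of_neg hneg
          have h2 : f₂ e = f e + ε * k := by rw [hf₂]; simp only []; rw [hk']; ring
          have hle0 : f₂ e ≤ 0 := by
            rw [hkabs] at hεk; rw [hfabs] at hεk
            rw [h2]; linarith
          rw [abs_of_nonpos hle0, h2, hkabs, hfabs]; ring
        · exact absurd (by rw [hk, h0, Real.sign_zero, mul_zero]) hme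
        · rw [Real.sign_of_pos hpos, mul_one] at hk
          have hkabs : |m e| = k := by rw [hk]; simp
          have hfabs : |f e| = f e := abs_of_pos hpos
          have h2 : f₂ e = f e - ε * k := by rw [hf₂]; simp only []; rw [hk]
          have hge0 : 0 ≤ f₂ e := by
            rw [hkabs, hfabs] at hεk
            rw [h2]; linarith
          rw [abs_of_nonneg hge0, h2, hkabs, hfabs]
      have hmono : ∀ e, |f₂ e| ≤ |f e| := by
        intro e
        by_cases hme : m e = 0
        · rw [hf₂]; simp [hme]
        · obtain ⟨h1, _⟩ := hpt e hme
          have : 0 < ε * |m e| := mul_pos hεpos (abs_pos.mpr hme)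
          linarith
      have hzero : ∀ e, f e = 0 → f₂ e = 0 := by
        intro e hfe
        obtain ⟨k, hk⟩ := hm1 e
        rw [hf₂]; simp only []
        rw [hk, hfe, Real.sign_zero]; ring
      have hf₂e₀ : f₂ e₀ = 0 := by
        have hme₀ : m e₀ ≠ 0 := by simpa [hT] using he₀T
        obtain ⟨h1, _⟩ := hpt e₀ hme₀
        have h3 : ε * |m e₀| = |f e₀| := by
          rw [hε, he₀, div_mul_cancel₀ _ (abs_pos.mpr hme₀).ne']
        have : |f₂ e₀| = 0 := by rw [h1, h3]; ring
        exact abs_eq_zero.mp this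
      have hfe₀ : f e₀ ≠ 0 := hfm e₀ (by simpa [hT] using he₀T)
      -- support strictly decreases
      have hsub : (Finset.univ.filter fun e => f₂ e ≠ 0) ⊆
          (Finset.univ.filter fun e => f e ≠ 0) := by
        intro e he
        simp only [Finset.mem_filter, Finset.mem_univ, true_and] at he ⊢
        intro hfe
        exact he (hzero e hfe)
      have hlt : (Finset.univ.filter fun e => f₂ e ≠ 0).card <
          (Finset.univ.filter fun e => f e ≠ 0).card := by
        refine Finset.card_lt_card ?_
        rw [Finset.ssubset_iff_of_subset hsub]
        exact ⟨e₀, by simp [hfe₀], by simp [hf₂e₀]⟩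
      obtain ⟨σ, θ, f', hLDC, hσ, hle, hdvg⟩ := ih f₂ (by omega)
      refine ⟨σ, θ, f', hLDC, hσ, fun e => (hle e).trans (hmono e), fun x => ?_⟩
      rw [hdvg x, hf₂]
      rw [N.dvg_sub_smul f m ε x, hdvg0 x]
      ring
    · -- acyclic: build a potential and realize the flow itself
      push_neg at hcyc
      set θ0 : N.Bus → ℕ := fun a => {b | Relation.TransGen (N.fr f) b a}.ncard with hθ0
      have hmono : ∀ {a b : N.Bus}, N.fr f a b → θ0 a < θ0 b := by
        intro a b hab
        refine Set.ncard_lt_ncard ?_ (Set.toFinite _)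
        rw [ssubset_iff_subset_not_subset]
        refine ⟨fun c hc => Relation.TransGen.tail hc hab, fun hsub => ?_⟩
        exact hcyc a (hsub (Relation.TransGen.single hab))
      set M := 1 + ∑ e : N.Line, |f e| / N.t e with hM
      have hsumnn : (0:ℝ) ≤ ∑ e : N.Line, |f e| / N.t e :=
        Finset.sum_nonneg fun e _ => div_nonneg (abs_nonneg _) (ht e).le
      have hM1 : (1:ℝ) ≤ M := by rw [hM]; linarith
      have hMe : ∀ e, |f e| / N.t e ≤ M := by
        intro e
        have := Finset.single_le_sum
          (f := fun e => |f e| / N.t e)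
          (fun i _ => div_nonneg (abs_nonneg _) (ht i).le) (Finset.mem_univ e)
        rw [hM]; linarith
      have hMabs : ∀ e, |f e| ≤ M * N.t e := by
        intro e
        have := hMe e
        rwa [div_le_iff₀ (ht e)] at this
      set θ : N.Bus → ℝ := fun a => M * θ0 a with hθ
      have hdiff : ∀ {a b : N.Bus}, N.fr f a b → M ≤ θ b - θ a := by
        intro a b hab
        have h1 := hmono hab
        have h2 : (θ0 a : ℝ) + 1 ≤ θ0 b := by exact_mod_cast h1
        have : θ b - θ a = M * ((θ0 b : ℝ) - θ0 a) := by rw [hθ]; ring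
        rw [this]
        nlinarith
      refine ⟨fun e => if f e = 0 then 0 else f e / (θ (N.dst e) - θ (N.src e)),
        θ, f, ?_, ?_, fun e => le_rfl, fun a => rfl⟩
      · intro e
        dsimp only
        rcases lt_trichotomy (f e) 0 with hneg | h0 | hpos
        · have hr : N.fr f (N.dst e) (N.src e) := ⟨e, Or.inr ⟨hneg, rfl, rfl⟩⟩
          have hd : M ≤ θ (N.src e) - θ (N.dst e) := hdiff hr
          have hdneg : θ (N.dst e) - θ (N.src e) < 0 := by linarith
          rw [if_neg hneg.ne]
          rw [div_mul_cancel₀ _ hdneg.ne]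
        · rw [if_pos h0, h0, zero_mul]
        · have hr : N.fr f (N.src e) (N.dst e) := ⟨e, Or.inl ⟨hpos, rfl, rfl⟩⟩
          have hd : M ≤ θ (N.dst e) - θ (N.src e) := hdiff hr
          have hdpos : 0 < θ (N.dst e) - θ (N.src e) := by linarith
          rw [if_neg hpos.ne']
          rw [div_mul_cancel₀ _ hdpos.ne']
      · intro e
        dsimp only
        rcases lt_trichotomy (f e) 0 with hneg | h0 | hpos
        · have hr : N.fr f (N.dst e) (N.src e) := ⟨e, Or.inr ⟨hneg, rfl, rfl⟩⟩
          have hd : M ≤ θ (N.src e) - θ (N.dst e) := hdiff hr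
          have hdneg : θ (N.dst e) - θ (N.src e) < 0 := by linarith
          rw [if_neg hneg.ne]
          constructor
          · rw [div_nonneg_iff]
            exact Or.inr ⟨hneg.le, hdneg.le⟩
          · rw [div_le_iff_of_neg hdneg]
            have habs : |f e| = -f e := abs_of_neg hneg
            have h1 : |f e| ≤ M * N.t e := hMabs e
            have h2 : M * N.t e ≤ (θ (N.src e) - θ (N.dst e)) * N.t e :=
              mul_le_mul_of_nonneg_right hd (ht e).le
            nlinarith
        · rw [if_pos h0]
          exact ⟨le_rfl, (ht e).le⟩
        · have hr : N.fr f (N.src e) (N.dst e) := ⟨e, Or.inl ⟨hpos, rfl, rfl⟩⟩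
          have hd : M ≤ θ (N.dst e) - θ (N.src e) := hdiff hr
          have hdpos : 0 < θ (N.dst e) - θ (N.src e) := by linarith
          rw [if_neg hpos.ne']
          constructor
          · exact div_nonneg hpos.le hdpos.le
          · rw [div_le_iff₀ hdpos]
            have habs : |f e| = f e := abs_of_pos hpos
            have h1 : |f e| ≤ M * N.t e := hMabs e
            have h2 : M * N.t e ≤ (θ (N.dst e) - θ (N.src e)) * N.t e :=
              mul_le_mul_of_nonneg_right hd (ht e).le
            nlinarith

end Network

/-- If every line of `N` has susceptance lower bound `0` and a
positive (finite) upper bound, then `MFF(N) = MF(N)`. -/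
theorem mff_eq_mf_of_s_zero (N : Network)
    (hs : ∀ e, N.s e = 0) (ht : ∀ e, 0 < N.t e) :
    N.MFF = N.MF := by
  unfold Network.MFF Network.MF
  congr 1
  ext x
  simp only [Set.mem_setOf_eq]
  constructor
  · rintro ⟨σ, θ, f, g, l, hK, _, _, hC, hGL, hx⟩
    exact ⟨f, g, l, hK, hC, hGL, hx⟩
  · rintro ⟨f, g, l, hK, hC, hGL, hx⟩
    obtain ⟨σ, θ, f', hLDC, hσ, hle, hdvg⟩ :=
      N.exists_realizable ht (Finset.univ.filter fun e => f e ≠ 0).card f le_rfl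
    refine ⟨σ, θ, f', g, l, ?_, hLDC,
      fun e => ⟨by rw [hs e]; exact (hσ e).1, (hσ e).2⟩,
      fun e => (hle e).trans (hC e), hGL, hx⟩
    intro a
    show N.dvg f' a = g a - l a
    rw [hdvg a]
    exact hK a
end

section
/- Two-maximizer property of the generation-FACTS-choice network objective: define h: [0,1] → ℝ by h(r) = (1 − r) + 5.1 + (2/3)·r for r ≤ 0.65 and h(r) = (1 − r) + (5.1 − 1/3) + (4/3)·r for r ≥ 0.65 (the two formulas agree at r = 0.65). Then the maximum of h over [0,1] equals 6.1, and h(r) = 6.1 holds exactly for r ∈ {0, 1}; consequently the port flow w = 1 − r at optimality is exactly 0 or exactly 1. -/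
/-!
On `r ≤ 0.65` the objective is `6.1 - r / 3` and on `r > 0.65` it is `6.1 - (1 - r) / 3`:
each branch loses a third of the distance to its own end point of `[0, 1]`, so `6.1` is
the maximum and it is attained only at `r = 0` and `r = 1`.
-/

/-- The objective of the generation-FACTS-choice network: the total generation
`w + MFF_A(r)` with `w = 1 - r`, where `MFF_A(r) = 5.1 + (2/3) r` for
`r ≤ 0.65` and `MFF_A(r) = (5.1 - 1/3) + (4/3) r` for `r ≥ 0.65`. -/
noncomputable def choiceObjective (r : ℝ) : ℝ :=
  if r ≤ 0.65 then (1 - r) + 5.1 + (2 / 3) * r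
  else (1 - r) + (5.1 - 1 / 3) + (4 / 3) * r

lemma choiceObjective_of_le {r : ℝ} (h : r ≤ 0.65) : choiceObjective r = 6.1 - r / 3 := by
  rw [choiceObjective, if_pos h]
  ring

lemma choiceObjective_of_lt {r : ℝ} (h : 0.65 < r) :
    choiceObjective r = 6.1 - (1 - r) / 3 := by
  rw [choiceObjective, if_neg h.not_ge]
  ring

lemma choiceObjective_le {r : ℝ} (hr : r ∈ Set.Icc (0 : ℝ) 1) : choiceObjective r ≤ 6.1 := by
  rcases le_or_gt r 0.65 with h | h
  · rw [choiceObjective_of_le h]; linarith [hr.1]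
  · rw [choiceObjective_of_lt h]; linarith [hr.2]

lemma choiceObjective_eq_iff {r : ℝ} (hr : r ∈ Set.Icc (0 : ℝ) 1) :
    choiceObjective r = 6.1 ↔ r = 0 ∨ r = 1 := by
  rcases le_or_gt r 0.65 with h | h
  · rw [choiceObjective_of_le h]
    constructor
    · intro he; left; linarith
    · rintro (rfl | rfl) <;> norm_num at *
  · rw [choiceObjective_of_lt h]
    constructor
    · intro he; right; linarith
    · rintro (rfl | rfl) <;> norm_num at *

/-- Two-maximizer property of the generation-FACTS-choice
network objective: the maximum of `choiceObjective` over `[0, 1]` is `6.1`,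
and it is attained exactly at `r = 0` and `r = 1`; consequently the port flow
`w = 1 - r` at optimality is exactly `0` or exactly `1`. -/
theorem choiceObjective_two_maximizers :
    IsGreatest (choiceObjective '' Set.Icc (0 : ℝ) 1) 6.1 ∧
      (∀ r ∈ Set.Icc (0 : ℝ) 1,
        (choiceObjective r = 6.1 ↔ (r = 0 ∨ r = 1))) ∧
      (∀ r ∈ Set.Icc (0 : ℝ) 1,
        choiceObjective r = 6.1 → (1 - r = 1 ∨ 1 - r = 0)) := by
  have hzero : (0 : ℝ) ∈ Set.Icc (0 : ℝ) 1 := ⟨le_rfl, zero_le_one⟩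
  refine ⟨⟨⟨0, hzero, (choiceObjective_eq_iff hzero).2 (Or.inl rfl)⟩, ?_⟩,
    fun r hr => choiceObjective_eq_iff hr, fun r hr he => ?_⟩
  · rintro _ ⟨r, hr, rfl⟩
    exact choiceObjective_le hr
  · rcases (choiceObjective_eq_iff hr).1 he with rfl | rfl <;> norm_num
end

section
/- Existence of acyclic optimal flows (cycle cancellation): let (B, E) be a finite graph and (f, g, l) a triple satisfying Kirchhoff's conservation law and the capacity constraints |f_e| ≤ cap_e. Then there exists a flow f' on the same network such that (f', g, l) satisfies Kirchhoff's conservation law, |f'_e| ≤ |f_e| ≤ cap_e for every line e, and the directed graph whose arcs are the lines with nonzero flow f', each oriented in the direction of its flow, contains no directed cycle. In particular, the maximum flow MF(N) is attained by an acyclic optimal solution. -/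
/-- The arc relation of a flow: there is an arc from `a` to `b` when some line
with nonzero flow, oriented in the direction of its flow, goes from `a` to `b`
(from `src e` to `dst e` when `f e > 0`, from `dst e` to `src e` when `f e < 0`). -/
def FlowArc {B E : Type} (src dst : E → B) (f : E → ℝ) (a b : B) : Prop :=
  ∃ e, (src e = a ∧ dst e = b ∧ 0 < f e) ∨ (src e = b ∧ dst e = a ∧ f e < 0)

/-- A flow is acyclic if the directed graph whose arcs are the lines with
nonzero flow, each oriented in the direction of its flow, contains no
directed cycle. -/
def AcyclicFlow {B E : Type} (src dst : E → B) (f : E → ℝ) : Prop :=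
  ∀ a : B, ¬ Relation.TransGen (FlowArc src dst f) a a

section helpers

lemma sum_single_ite {E : Type} [Fintype E] [DecidableEq E]
    (p : E → Prop) [DecidablePred p] (e₀ : E) (x : ℝ) :
    ∑ e : E, (if p e then (if e = e₀ then x else 0) else 0) = if p e₀ then x else 0 := by
  have h : ∀ e : E, (if p e then (if e = e₀ then x else 0) else 0)
      = if e = e₀ then (if p e₀ then x else 0) else 0 := by
    intro e; by_cases h : e = e₀ <;> simp [h]
  rw [Finset.sum_congr rfl fun e _ => h e, Finset.sum_ite_eq' Finset.univ e₀]
  simp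

lemma abs_sub_eq_of_sign (x u : ℝ) (h1 : |u| ≤ |x|) (h2 : 0 ≤ u * x) :
    |x - u| = |x| - |u| := by
  by_cases hu0 : u = 0
  · simp [hu0]
  have hx0 : x ≠ 0 := by
    intro h; rw [h] at h1; simp at h1; exact hu0 h1
  have hux : 0 < u * x := lt_of_le_of_ne h2 (Ne.symm (mul_ne_zero hu0 hx0))
  rcases lt_or_gt_of_ne hx0 with hx | hx
  · have hu : u < 0 := by nlinarith
    rw [abs_of_neg hx, abs_of_neg hu] at *
    rw [abs_of_nonpos (by linarith)]
    ring
  · have hu : 0 < u := by nlinarith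
    rw [abs_of_pos hx, abs_of_pos hu] at *
    rw [abs_of_nonneg (by linarith)]

lemma exists_circulation_single {B E : Type} [Fintype E] [DecidableEq B] [DecidableEq E]
    (src dst : E → B) (f : E → ℝ) {a b : B} (h : FlowArc src dst f a b) :
    ∃ c : E → ℤ,
      (∀ v, (∑ e : E, if src e = v then (c e : ℝ) else 0) -
            (∑ e : E, if dst e = v then (c e : ℝ) else 0)
          = (if a = v then 1 else 0) - (if b = v then 1 else 0)) ∧
      (∀ e, c e ≠ 0 → 0 < (c e : ℝ) * f e) ∧ (∃ e, c e ≠ 0) := by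
  obtain ⟨e₀, he⟩ := h
  rcases he with ⟨hs, hd, hf⟩ | ⟨hs, hd, hf⟩
  · refine ⟨fun e => if e = e₀ then 1 else 0, ?_, ?_, ⟨e₀, by simp⟩⟩
    · intro v
      simp only [apply_ite (fun (z:ℤ) => (z:ℝ)), Int.cast_one, Int.cast_zero]
      rw [sum_single_ite (fun e => src e = v) e₀ 1, sum_single_ite (fun e => dst e = v) e₀ 1,
        hs, hd]
    · intro e hce
      have : e = e₀ := by by_contra h'; simp [h'] at hce
      subst this; simp [hce] at *; simpa using hf
  · refine ⟨fun e => if e = e₀ then -1 else 0, ?_, ?_, ⟨e₀, by simp⟩⟩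
    · intro v
      simp only [apply_ite (fun (z:ℤ) => (z:ℝ)), Int.cast_neg, Int.cast_one, Int.cast_zero]
      rw [sum_single_ite (fun e => src e = v) e₀ (-1), sum_single_ite (fun e => dst e = v) e₀ (-1),
        hs, hd]
      by_cases h2 : a = v <;> by_cases h3 : b = v <;> simp [h2, h3, eq_comm]
    · intro e hce
      have : e = e₀ := by by_contra h'; simp [h'] at hce
      subst this; simp; nlinarith

lemma exists_circulation {B E : Type} [Fintype E] [DecidableEq B] [DecidableEq E]
    (src dst : E → B) (f : E → ℝ) {a b : B}
    (h : Relation.TransGen (FlowArc src dst f) a b) :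
    ∃ c : E → ℤ,
      (∀ v, (∑ e : E, if src e = v then (c e : ℝ) else 0) -
            (∑ e : E, if dst e = v then (c e : ℝ) else 0)
          = (if a = v then 1 else 0) - (if b = v then 1 else 0)) ∧
      (∀ e, c e ≠ 0 → 0 < (c e : ℝ) * f e) ∧ (∃ e, c e ≠ 0) := by
  induction h with
  | single h => exact exists_circulation_single src dst f h
  | tail _ hstep ih =>
    obtain ⟨c₁, hd₁, hs₁, hn₁⟩ := ih
    obtain ⟨c₂, hd₂, hs₂, hn₂⟩ := exists_circulation_single src dst f hstep
    have key : ∀ e, (c₁ e + c₂ e) ≠ 0 → 0 < ((c₁ e + c₂ e : ℤ) : ℝ) * f e := by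
      intro e hce
      have h1 : 0 ≤ (c₁ e : ℝ) * f e := by
        by_cases h' : c₁ e = 0; · simp [h']
        · exact le_of_lt (hs₁ e h')
      have h2 : 0 ≤ (c₂ e : ℝ) * f e := by
        by_cases h' : c₂ e = 0; · simp [h']
        · exact le_of_lt (hs₂ e h')
      have h3 : c₁ e ≠ 0 ∨ c₂ e ≠ 0 := by
        by_contra h'; push_neg at h'; simp [h'.1, h'.2] at hce
      push_cast
      rw [add_mul]
      rcases h3 with h' | h'
      · exact add_pos_of_pos_of_nonneg (hs₁ e h') h2
      · exact add_pos_of_nonneg_of_pos h1 (hs₂ e h')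
    refine ⟨fun e => c₁ e + c₂ e, ?_, key, ?_⟩
    · intro v
      have split1 : ∀ (q : E → B),
          (∑ e : E, if q e = v then ((c₁ e + c₂ e : ℤ) : ℝ) else 0)
          = (∑ e : E, if q e = v then (c₁ e : ℝ) else 0)
            + (∑ e : E, if q e = v then (c₂ e : ℝ) else 0) := by
        intro q
        rw [← Finset.sum_add_distrib]
        refine Finset.sum_congr rfl fun e _ => ?_
        split <;> push_cast <;> ring
      rw [split1 src, split1 dst]
      have := hd₁ v
      have := hd₂ v
      linarith
    · obtain ⟨e, he⟩ := hn₁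
      refine ⟨e, ?_⟩
      intro h'
      have hpos : 0 < ((c₁ e + c₂ e : ℤ) : ℝ) * f e := by
        have h1 : 0 < (c₁ e : ℝ) * f e := hs₁ e he
        have h2 : 0 ≤ (c₂ e : ℝ) * f e := by
          by_cases h'' : c₂ e = 0; · simp [h'']
          · exact le_of_lt (hs₂ e h'')
        push_cast; rw [add_mul]; linarith
      exact absurd hpos (by simp [show c₁ e + c₂ e = 0 from h'])

end helpers

/-- Existence of acyclic optimal flows (cycle cancellation):
if `(f, g, l)` satisfies Kirchhoff's conservation law and the capacity
constraints `|f e| ≤ cap e` on a finite graph, then there is a flow `f'`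
such that `(f', g, l)` satisfies Kirchhoff's conservation law,
`|f' e| ≤ |f e| ≤ cap e` for every line `e`, and `f'` is acyclic. -/
theorem exists_acyclic_flow {B E : Type} [Fintype B] [Fintype E] [DecidableEq B]
    (src dst : E → B) (hne : ∀ e, src e ≠ dst e)
    (cap : E → ℝ) (f : E → ℝ) (g l : B → ℝ)
    (hK : ∀ a : B,
      (∑ e : E, if src e = a then f e else 0) -
        (∑ e : E, if dst e = a then f e else 0) = g a - l a)
    (hcap : ∀ e, |f e| ≤ cap e) :
    ∃ f' : E → ℝ,
      (∀ a : B,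
        (∑ e : E, if src e = a then f' e else 0) -
          (∑ e : E, if dst e = a then f' e else 0) = g a - l a) ∧
      (∀ e, |f' e| ≤ |f e| ∧ |f' e| ≤ cap e) ∧
      AcyclicFlow src dst f' := by
  classical
  set F : (E → ℝ) → ℝ := fun h => ∑ e : E, |h e| with hF
  set K : Set (E → ℝ) := {h | (∀ a : B,
      (∑ e : E, if src e = a then h e else 0) -
        (∑ e : E, if dst e = a then h e else 0) = g a - l a) ∧ ∀ e, |h e| ≤ |f e|} with hKdef
  have hfK : f ∈ K := ⟨hK, fun e => le_refl _⟩
  have contdiv : ∀ (q : E → B) (a : B),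
      Continuous (fun h : E → ℝ => ∑ e : E, if q e = a then h e else 0) := by
    intro q a
    apply continuous_finset_sum
    intro e _
    by_cases hqe : q e = a
    · simpa [hqe] using continuous_apply e
    · simp only [hqe, if_false]; exact continuous_const
  have hKclosed : IsClosed K := by
    have h1 : K = (⋂ a : B, {h : E → ℝ | (∑ e : E, if src e = a then h e else 0) -
        (∑ e : E, if dst e = a then h e else 0) = g a - l a}) ∩ ⋂ e : E, {h | |h e| ≤ |f e|} := by
      ext h
      simp only [hKdef, Set.mem_setOf_eq, Set.mem_inter_iff, Set.mem_iInter]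
    rw [h1]
    refine IsClosed.inter (isClosed_iInter fun a => ?_) (isClosed_iInter fun e => ?_)
    · exact isClosed_eq ((contdiv src a).sub (contdiv dst a)) continuous_const
    · exact isClosed_le ((continuous_apply e).abs) continuous_const
  have hKcomp : IsCompact K := by
    refine IsCompact.of_isClosed_subset
      (isCompact_univ_pi fun e => isCompact_Icc (a := -|f e|) (b := |f e|)) hKclosed ?_
    intro h hh
    simp only [Set.mem_univ_pi]
    intro e
    exact Set.mem_Icc.mpr (abs_le.mp (hh.2 e))
  have hFcont : Continuous F := continuous_finset_sum _ fun e _ => (continuous_apply e).abs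
  obtain ⟨f₀, hf₀K, hmin⟩ := hKcomp.exists_isMinOn ⟨f, hfK⟩ hFcont.continuousOn
  have hacyc : AcyclicFlow src dst f₀ := by
    by_contra hcyc
    simp only [AcyclicFlow, not_forall, not_not] at hcyc
    obtain ⟨a, ha⟩ := hcyc
    obtain ⟨c, hdiv, hsign, e₀, he₀⟩ := exists_circulation src dst f₀ ha
    have hdiv0 : ∀ v, (∑ e : E, if src e = v then (c e : ℝ) else 0)
        = ∑ e : E, if dst e = v then (c e : ℝ) else 0 := by
      intro v
      have := hdiv v
      rw [sub_self] at this
      linarith [this]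
    have hS : (Finset.univ.filter fun e => c e ≠ 0).Nonempty := ⟨e₀, by simp [he₀]⟩
    obtain ⟨e₁, he₁S, he₁min⟩ :=
      Finset.exists_min_image _ (fun e => |f₀ e| / |(c e : ℝ)|) hS
    have hc₁ : c e₁ ≠ 0 := by simpa using (Finset.mem_filter.mp he₁S).2
    have hf₀e₁ : f₀ e₁ ≠ 0 := by
      intro h; have := hsign e₁ hc₁; rw [h] at this; simp at this
    set δ := |f₀ e₁| / |(c e₁ : ℝ)| with hδ
    have hδpos : 0 < δ :=
      div_pos (abs_pos.mpr hf₀e₁) (abs_pos.mpr (by exact_mod_cast hc₁))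
    set f₂ : E → ℝ := fun e => f₀ e - δ * c e with hf₂
    have hpt : ∀ e, c e ≠ 0 → |f₂ e| = |f₀ e| - δ * |(c e : ℝ)| := by
      intro e hce
      have hmem : e ∈ Finset.univ.filter fun e => c e ≠ 0 := by simp [hce]
      have hle : δ ≤ |f₀ e| / |(c e : ℝ)| := he₁min e hmem
      have hcpos : 0 < |(c e : ℝ)| := abs_pos.mpr (by exact_mod_cast hce)
      have h1 : |δ * (c e : ℝ)| ≤ |f₀ e| := by
        rw [abs_mul, abs_of_pos hδpos]
        calc δ * |(c e:ℝ)| ≤ (|f₀ e| / |(c e:ℝ)|) * |(c e:ℝ)| := by nlinarith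
          _ = |f₀ e| := div_mul_cancel₀ _ (ne_of_gt hcpos)
      have h2 : 0 ≤ (δ * (c e : ℝ)) * f₀ e := by
        have := hsign e hce; nlinarith
      have h3 := abs_sub_eq_of_sign (f₀ e) (δ * c e) h1 h2
      show |f₀ e - δ * c e| = _
      rw [h3, abs_mul, abs_of_pos hδpos]
    have hptle : ∀ e, |f₂ e| ≤ |f₀ e| := by
      intro e
      by_cases hce : c e = 0
      · show |f₀ e - δ * c e| ≤ _
        simp [hce]
      · rw [hpt e hce]
        nlinarith [abs_pos.mpr (show ((c e : ℤ) : ℝ) ≠ 0 by exact_mod_cast hce), hδpos]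
    have hf₂K : f₂ ∈ K := by
      constructor
      · intro v
        have split1 : ∀ q : E → B, (∑ e : E, if q e = v then f₂ e else 0)
            = (∑ e : E, if q e = v then f₀ e else 0)
              - δ * ∑ e : E, if q e = v then (c e : ℝ) else 0 := by
          intro q
          rw [Finset.mul_sum, ← Finset.sum_sub_distrib]
          refine Finset.sum_congr rfl fun e _ => ?_
          show (if q e = v then f₀ e - δ * c e else 0) = _
          split <;> ring
        rw [split1 src, split1 dst, hdiv0 v]
        have hA := hf₀K.1 v
        linarith
      · intro e; exact le_trans (hptle e) (hf₀K.2 e)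
    have hlt : F f₂ < F f₀ := by
      apply Finset.sum_lt_sum (fun e _ => hptle e)
      refine ⟨e₁, Finset.mem_univ e₁, ?_⟩
      rw [hpt e₁ hc₁]
      have : 0 < δ * |(c e₁ : ℝ)| := mul_pos hδpos (abs_pos.mpr (by exact_mod_cast hc₁))
      linarith
    exact absurd (isMinOn_iff.mp hmin f₂ hf₂K) (not_le.mpr hlt)
  exact ⟨f₀, hf₀K.1, fun e => ⟨hf₀K.2 e, le_trans (hf₀K.2 e) (hcap e)⟩, hacyc⟩
end
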